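/- Let b > 0 and define μ̃(z) = (1/(2b))·ψ₁(1 + z/(2b)) − 1/(z + 2b), where ψ₁ is the trigamma function. Then there exists a constant M > 0, depending only on b, with the following property: for every A > 2b, every B > 0, and every continuous function y on the vertical line {A + iη : η ∈ ℝ} satisfying |y(A + iη)| ≤ B/|A + iη|² for all η ∈ ℝ, the convolution (μ̃ ∗ y)(z) = (1/(2π)) ∫_{−∞}^{+∞} y(A + iη)·μ̃(z − A − iη) dη converges absolutely for every z with Re z ≥ A and satisfies |(μ̃ ∗ y)(z)| ≤ M·b·B/|z|² for all z with Re z ≥ A. -/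

import Mathlib

/-!
Put `v = 1 + z/(2b)`, so that `μ̃(z) = (ψ₁(v) - 1/v)/(2b)`. Writing `1/v` as the telescoping sum
`Σ (1/(v+n) - 1/(v+n+1))` gives `ψ₁(v) - 1/v = Σ 1/((v+n)²(v+n+1))`. For `Re v ≥ 1` we have
`|v+n| ≥ (|v|+n)/2`, so this series is dominated termwise by the telescoping differences of
`8/(|v|+n)²`, whence `|μ̃(z)| ≤ 16b/|z+2b|²` on `Re z ≥ 0`. On the line, `y` and `μ̃(z - ·)` are
then inverse-square weights centred at `A` and `w = z - A + 2b`; since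
`1/(|p|²|q|²) ≤ 2/|p+q|² · (1/|p|² + 1/|q|²)` and `∫ dη/|s+iη|² = π/|Re s|` (a Cauchy density),
the convolution is at most `16bB/|z+2b|² · (1/A + 1/Re w) ≤ 16B/|z|²`.
-/

open Complex MeasureTheory

/-- The trigamma function `ψ₁(w) = (d/dw) Γ'(w)/Γ(w) = (d²/dw²) log Γ(w)`, given by its
standard (everywhere valid) series representation `ψ₁(w) = Σ_{n≥0} 1/(w+n)²`. -/
noncomputable def trigamma (w : ℂ) : ℂ := ∑' n : ℕ, 1 / (w + (n : ℂ)) ^ 2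

open Filter Topology
open scoped Real

theorem hasSum_sub_succ_of_tendsto {E : Type*} [NormedAddCommGroup E] {f : ℕ → E} {a : E}
    (hs : Summable fun n => f n - f (n + 1)) (h : Tendsto f atTop (𝓝 a)) :
    HasSum (fun n => f n - f (n + 1)) (f 0 - a) :=
  hs.hasSum_iff_tendsto_nat.2 <| by
    simpa only [Finset.sum_range_sub'] using tendsto_const_nhds.sub h

theorem Complex.norm_le_norm_add_ofReal {z : ℂ} (hz : 0 ≤ z.re) {c : ℝ} (hc : 0 ≤ c) :
    ‖z‖ ≤ ‖z + c‖ := by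
  rw [← sq_le_sq₀ (norm_nonneg _) (norm_nonneg _), Complex.sq_norm, Complex.sq_norm,
    Complex.normSq_apply, Complex.normSq_apply]
  simp only [add_re, ofReal_re, add_im, ofReal_im, add_zero]
  nlinarith [mul_nonneg hz hc]

section Trigamma

variable {v : ℂ}

theorem nat_add_one_le_norm_add_nat (hv : 1 ≤ v.re) (n : ℕ) : (n : ℝ) + 1 ≤ ‖v + n‖ :=
  calc (n : ℝ) + 1 ≤ (v + n).re := by simp only [add_re, natCast_re]; linarith
    _ ≤ ‖v + n‖ := re_le_norm _

theorem norm_one_div_add_nat_sq_le (hv : 1 ≤ v.re) (n : ℕ) :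
    ‖1 / (v + n) ^ 2‖ ≤ 1 / ((n : ℝ) + 1) ^ 2 := by
  rw [norm_div, norm_one, norm_pow]
  gcongr
  exact nat_add_one_le_norm_add_nat hv n

theorem summable_one_div_nat_add_one_sq : Summable fun n : ℕ => 1 / ((n : ℝ) + 1) ^ 2 := by
  simpa using (summable_nat_add_iff 1).2 (Real.summable_one_div_nat_pow.2 one_lt_two)

theorem summable_one_div_add_nat_sq (hv : 1 ≤ v.re) : Summable fun n : ℕ => 1 / (v + n) ^ 2 :=
  .of_norm_bounded summable_one_div_nat_add_one_sq (norm_one_div_add_nat_sq_le hv)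

theorem continuousOn_trigamma : ContinuousOn trigamma {v | 1 ≤ v.re} := by
  refine continuousOn_tsum (fun n => ContinuousOn.div continuousOn_const (by fun_prop) ?_)
    summable_one_div_nat_add_one_sq fun n v hv => norm_one_div_add_nat_sq_le hv n
  intro v hv
  exact pow_ne_zero 2 (norm_pos_iff.1 ((Nat.cast_add_one_pos n).trans_le
    (nat_add_one_le_norm_add_nat hv n)))

theorem norm_add_nat_div_two_le_norm_add_nat (hv : 1 ≤ v.re) (n : ℕ) : (‖v‖ + n) / 2 ≤ ‖v + n‖ := by
  have h1 := Complex.norm_le_norm_add_ofReal (z := v) (by linarith) (Nat.cast_nonneg n)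
  have h2 := nat_add_one_le_norm_add_nat hv n
  push_cast at h1
  linarith

theorem norm_trigamma_sub_inv_le (hv : 1 ≤ v.re) : ‖trigamma v - 1 / v‖ ≤ 8 / ‖v‖ ^ 2 := by
  have hne (n : ℕ) : v + n ≠ 0 := norm_pos_iff.1 <|
    (Nat.cast_add_one_pos n).trans_le (nat_add_one_le_norm_add_nat hv n)
  have hv0 : 0 < ‖v‖ := by linarith [re_le_norm v]
  set G : ℕ → ℝ := fun n => 8 / (‖v‖ + n) ^ 2
  have hG : HasSum (fun n => G n - G (n + 1)) (8 / ‖v‖ ^ 2) := by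
    have hanti (n : ℕ) : G (n + 1) ≤ G n := by
      simp only [G]; gcongr; linarith
    have hlim : Tendsto G atTop (𝓝 0) :=
      tendsto_const_nhds.div_atTop <| (tendsto_pow_atTop two_ne_zero).comp <|
        tendsto_atTop_add_const_left _ _ tendsto_natCast_atTop_atTop
    have hsum : Summable fun n => G n - G (n + 1) :=
      summable_of_sum_range_le (c := G 0) (fun n => sub_nonneg.2 (hanti n)) fun n => by
        rw [Finset.sum_range_sub']
        exact sub_le_self _ (by positivity)
    simpa [G] using hasSum_sub_succ_of_tendsto hsum hlim
  set t : ℕ → ℂ := fun n => 1 / ((v + n) ^ 2 * (v + (n + 1 : ℕ)))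
  have ht (n : ℕ) : ‖t n‖ ≤ G n - G (n + 1) := by
    have h1 := norm_add_nat_div_two_le_norm_add_nat hv n
    have h2 := norm_add_nat_div_two_le_norm_add_nat hv (n + 1)
    have hp : 0 < ‖v‖ + n := by positivity
    simp only [t, G, norm_div, norm_one, norm_mul, norm_pow]
    push_cast at h2 ⊢
    calc 1 / (‖v + n‖ ^ 2 * ‖v + (n + 1)‖)
        ≤ 1 / (((‖v‖ + n) / 2) ^ 2 * ((‖v‖ + (n + 1)) / 2)) := by gcongr
      _ ≤ 8 / (‖v‖ + n) ^ 2 - 8 / (‖v‖ + (n + 1)) ^ 2 := by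
        rw [← sub_nonneg, ← add_assoc]
        generalize ‖v‖ + n = p at hp ⊢
        have : 8 / p ^ 2 - 8 / (p + 1) ^ 2 - 1 / ((p / 2) ^ 2 * ((p + 1) / 2))
            = 8 / (p * (p + 1) ^ 2) := by field_simp; ring
        rw [this]; positivity
  have hpartial (n : ℕ) : 1 / (v + n) ^ 2 - t n = 1 / (v + n) - 1 / (v + (n + 1 : ℕ)) := by
    have := hne n; have := hne (n + 1); simp only [t]; push_cast at this ⊢; field_simp; ring
  have htel : HasSum (fun n => 1 / (v + n) - 1 / (v + (n + 1 : ℕ))) (1 / v) := by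
    have hsum : Summable fun n => 1 / (v + n) - 1 / (v + (n + 1 : ℕ)) :=
      ((summable_one_div_add_nat_sq hv).sub (.of_norm_bounded hG.summable ht)).congr hpartial
    have hlim : Tendsto (fun n : ℕ => 1 / (v + n)) atTop (𝓝 0) :=
      squeeze_zero_norm (fun n => by
          rw [norm_div, norm_one]; gcongr; exact nat_add_one_le_norm_add_nat hv n)
        tendsto_one_div_add_atTop_nhds_zero_nat
    simpa using hasSum_sub_succ_of_tendsto hsum hlim
  have hsplit : trigamma v - 1 / v = ∑' n, t n := by
    rw [trigamma, ← ((summable_one_div_add_nat_sq hv).hasSum.sub htel).tsum_eq]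
    simp_rw [← hpartial, sub_sub_cancel]
  rw [hsplit]
  exact tsum_of_norm_bounded hG ht

end Trigamma

noncomputable def trigammaKernel (b : ℝ) (z : ℂ) : ℂ :=
  1 / (2 * (b : ℂ)) * trigamma (1 + z / (2 * (b : ℂ))) - 1 / (z + 2 * (b : ℂ))

section Kernel

variable {b : ℝ} {z : ℂ}

theorem one_le_re_one_add_div (hb : 0 < b) (hz : 0 ≤ z.re) : 1 ≤ (1 + z / (2 * (b : ℂ))).re := by
  rw [show (2 * (b : ℂ)) = ((2 * b : ℝ) : ℂ) by push_cast; ring, add_re, one_re, div_ofReal_re]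
  have : 0 ≤ z.re / (2 * b) := by positivity
  linarith

theorem norm_trigammaKernel_le (hb : 0 < b) (hz : 0 ≤ z.re) :
    ‖trigammaKernel b z‖ ≤ 16 * b / ‖z + 2 * b‖ ^ 2 := by
  set v := 1 + z / (2 * (b : ℂ))
  have hb0 : (b : ℂ) ≠ 0 := by exact_mod_cast hb.ne'
  have hv : z + 2 * b = 2 * b * v := by simp only [v]; field_simp; ring
  have hnorm : ‖z + 2 * b‖ = 2 * b * ‖v‖ := by
    rw [hv, norm_mul]; norm_cast; rw [Real.norm_of_nonneg (by positivity)]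
  have hkernel : trigammaKernel b z = 1 / (2 * b) * (trigamma v - 1 / v) := by
    show 1 / (2 * (b : ℂ)) * trigamma v - 1 / (z + 2 * b) = _
    rw [hv, mul_sub, one_div_mul_one_div]
  have hv0 : 0 < ‖v‖ := by linarith [re_le_norm v, one_le_re_one_add_div hb hz]
  calc ‖trigammaKernel b z‖ = 1 / (2 * b) * ‖trigamma v - 1 / v‖ := by
        rw [hkernel, norm_mul]; norm_cast; rw [Real.norm_of_nonneg (by positivity)]
    _ ≤ 1 / (2 * b) * (8 / ‖v‖ ^ 2) := by
        gcongr; exact norm_trigamma_sub_inv_le (one_le_re_one_add_div hb hz)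
    _ = 16 * b / ‖z + 2 * b‖ ^ 2 := by rw [hnorm]; field_simp; ring

theorem continuousOn_trigammaKernel (hb : 0 < b) :
    ContinuousOn (trigammaKernel b) {z | 0 ≤ z.re} := by
  refine (continuousOn_const.mul (continuousOn_trigamma.comp (by fun_prop)
    fun z hz => one_le_re_one_add_div hb hz)).sub (continuousOn_const.div (by fun_prop) ?_)
  intro z (hz : 0 ≤ z.re) h0
  have := congrArg re h0
  simp only [add_re, mul_re, re_ofNat, ofReal_re, im_ofNat, ofReal_im, zero_re] at this
  linarith

variable {A : ℝ}

theorem re_sub_ofReal_sub_mul_I_nonneg (hz : A ≤ z.re) (η : ℝ) : 0 ≤ (z - A - η * I).re := by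
  simpa only [sub_re, ofReal_re, mul_re, I_re, mul_zero, ofReal_im, I_im, mul_one, sub_self,
    sub_zero, sub_nonneg] using hz

theorem norm_trigammaKernel_sub_mul_I_le (hb : 0 < b) (hz : A ≤ z.re) (η : ℝ) :
    ‖trigammaKernel b (z - A - η * I)‖ ≤ 16 * b / ‖z - A + 2 * b - η * I‖ ^ 2 := by
  rw [show z - A + 2 * b - η * I = z - A - η * I + 2 * b by ring]
  exact norm_trigammaKernel_le hb (re_sub_ofReal_sub_mul_I_nonneg hz η)

theorem continuous_trigammaKernel_sub_mul_I (hb : 0 < b) (hz : A ≤ z.re) :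
    Continuous fun η : ℝ => trigammaKernel b (z - A - η * I) :=
  (continuousOn_trigammaKernel hb).comp_continuous (by fun_prop)
    (re_sub_ofReal_sub_mul_I_nonneg hz)

end Kernel

theorem inv_sq_norm_mul_inv_sq_norm_le {E : Type*} [NormedAddCommGroup E] {x y : E} (hx : x ≠ 0)
    (hy : y ≠ 0) (hxy : x + y ≠ 0) :
    (‖x‖ ^ 2)⁻¹ * (‖y‖ ^ 2)⁻¹ ≤ 2 / ‖x + y‖ ^ 2 * ((‖x‖ ^ 2)⁻¹ + (‖y‖ ^ 2)⁻¹) := by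
  have hx' := norm_pos_iff.2 hx
  have hy' := norm_pos_iff.2 hy
  have hxy' := norm_pos_iff.2 hxy
  have h : ‖x + y‖ ^ 2 ≤ 2 * (‖x‖ ^ 2 + ‖y‖ ^ 2) := by
    nlinarith [norm_add_le x y, sq_nonneg (‖x‖ - ‖y‖)]
  rw [show 2 / ‖x + y‖ ^ 2 * ((‖x‖ ^ 2)⁻¹ + (‖y‖ ^ 2)⁻¹)
      = 2 * (‖x‖ ^ 2 + ‖y‖ ^ 2) / ‖x + y‖ ^ 2 * ((‖x‖ ^ 2)⁻¹ * (‖y‖ ^ 2)⁻¹) by field_simp; ring]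
  exact le_mul_of_one_le_left (by positivity) ((one_le_div (by positivity)).2 h)

theorem norm_add_mul_I_sq (s : ℂ) (η : ℝ) : ‖s + η * I‖ ^ 2 = (η - -s.im) ^ 2 + s.re ^ 2 := by
  rw [Complex.sq_norm, normSq_apply]
  simp only [add_re, mul_re, ofReal_re, I_re, mul_zero, ofReal_im, I_im, mul_one, sub_self,
    add_zero, add_im, mul_im]
  ring

theorem norm_sub_mul_I (w : ℂ) (η : ℝ) : ‖w - η * I‖ = ‖(starRingEnd ℂ) w + η * I‖ := by
  rw [← norm_conj]; simp

theorem add_mul_I_ne_zero {s : ℂ} (hs : s.re ≠ 0) (η : ℝ) : s + η * I ≠ 0 := fun h =>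
  hs (by simpa using congrArg re h)

section Lorentzian

open ProbabilityTheory

variable {s : ℂ}

theorem inv_norm_add_mul_I_sq_eq (hs : s.re ≠ 0) (η : ℝ) :
    (‖s + η * I‖ ^ 2)⁻¹ = π / |s.re| * cauchyPDFReal (-s.im) ‖s.re‖₊ η := by
  rw [cauchyPDFReal_def, norm_add_mul_I_sq, coe_nnnorm, Real.norm_eq_abs, sq_abs]
  field_simp

theorem integrable_inv_norm_add_mul_I_sq (hs : s.re ≠ 0) :
    Integrable fun η : ℝ => (‖s + η * I‖ ^ 2)⁻¹ := by
  simp_rw [inv_norm_add_mul_I_sq_eq hs]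
  exact (integrable_cauchyPDFReal _).const_mul _

theorem integral_inv_norm_add_mul_I_sq (hs : s.re ≠ 0) :
    ∫ η : ℝ, (‖s + η * I‖ ^ 2)⁻¹ = π / |s.re| := by
  simp_rw [inv_norm_add_mul_I_sq_eq hs]
  rw [integral_const_mul, integral_cauchyPDFReal_eq_one _ (by simpa using hs), mul_one]

end Lorentzian

section Convolution

variable {f g : ℝ → ℂ} {s w : ℂ} {B C : ℝ}

noncomputable def invSqMajorant (s w : ℂ) (η : ℝ) : ℝ :=
  (‖s + η * I‖ ^ 2)⁻¹ + (‖w - η * I‖ ^ 2)⁻¹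

theorem integrable_invSqMajorant (hs : s.re ≠ 0) (hw : w.re ≠ 0) :
    Integrable (invSqMajorant s w) := by
  refine (integrable_inv_norm_add_mul_I_sq hs).add ?_
  simp_rw [norm_sub_mul_I]
  exact integrable_inv_norm_add_mul_I_sq (by simpa using hw)

theorem integral_invSqMajorant (hs : s.re ≠ 0) (hw : w.re ≠ 0) :
    ∫ η, invSqMajorant s w η = π / |s.re| + π / |w.re| := by
  have hw' : ((starRingEnd ℂ) w).re ≠ 0 := by simpa using hw
  simp_rw [invSqMajorant, norm_sub_mul_I]
  rw [integral_add (integrable_inv_norm_add_mul_I_sq hs) (integrable_inv_norm_add_mul_I_sq hw'),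
    integral_inv_norm_add_mul_I_sq hs, integral_inv_norm_add_mul_I_sq hw', conj_re]

theorem norm_mul_le_invSqMajorant (hs : s.re ≠ 0) (hw : w.re ≠ 0) (hsw : s + w ≠ 0)
    (hf : ∀ η, ‖f η‖ ≤ B / ‖s + η * I‖ ^ 2) (hg : ∀ η, ‖g η‖ ≤ C / ‖w - η * I‖ ^ 2) (η : ℝ) :
    ‖f η * g η‖ ≤ 2 * B * C / ‖s + w‖ ^ 2 * invSqMajorant s w η := by
  have hs' := add_mul_I_ne_zero hs η
  have hw' : w - η * I ≠ 0 := by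
    rw [← norm_ne_zero_iff, norm_sub_mul_I, norm_ne_zero_iff]
    exact add_mul_I_ne_zero (by simpa using hw) η
  have hB : 0 ≤ B := nonneg_of_mul_nonneg_left ((norm_nonneg _).trans (hf η))
    (by have := norm_pos_iff.2 hs'; positivity)
  have hC : 0 ≤ C := nonneg_of_mul_nonneg_left ((norm_nonneg _).trans (hg η))
    (by have := norm_pos_iff.2 hw'; positivity)
  calc ‖f η * g η‖ ≤ B / ‖s + η * I‖ ^ 2 * (C / ‖w - η * I‖ ^ 2) := by
        rw [norm_mul]; exact mul_le_mul (hf η) (hg η) (norm_nonneg _) (by positivity)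
    _ = B * C * ((‖s + η * I‖ ^ 2)⁻¹ * (‖w - η * I‖ ^ 2)⁻¹) := by ring
    _ ≤ B * C * (2 / ‖s + w‖ ^ 2 * invSqMajorant s w η) := by
        refine mul_le_mul_of_nonneg_left ?_ (mul_nonneg hB hC)
        simpa only [add_add_sub_cancel, invSqMajorant] using inv_sq_norm_mul_inv_sq_norm_le hs' hw'
          (by rwa [add_add_sub_cancel])
    _ = _ := by ring

theorem integrable_mul_of_inv_sq_bounds (hs : s.re ≠ 0) (hw : w.re ≠ 0) (hsw : s + w ≠ 0)
    (hfm : AEStronglyMeasurable f) (hgm : AEStronglyMeasurable g)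
    (hf : ∀ η, ‖f η‖ ≤ B / ‖s + η * I‖ ^ 2) (hg : ∀ η, ‖g η‖ ≤ C / ‖w - η * I‖ ^ 2) :
    Integrable fun η => f η * g η :=
  ((integrable_invSqMajorant hs hw).const_mul _).mono' (hfm.mul hgm)
    (.of_forall (norm_mul_le_invSqMajorant hs hw hsw hf hg))

theorem norm_integral_mul_le_of_inv_sq_bounds (hs : s.re ≠ 0) (hw : w.re ≠ 0) (hsw : s + w ≠ 0)
    (hf : ∀ η, ‖f η‖ ≤ B / ‖s + η * I‖ ^ 2) (hg : ∀ η, ‖g η‖ ≤ C / ‖w - η * I‖ ^ 2) :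
    ‖∫ η, f η * g η‖ ≤ 2 * B * C / ‖s + w‖ ^ 2 * (π / |s.re| + π / |w.re|) := by
  rw [← integral_invSqMajorant hs hw, ← integral_const_mul]
  exact norm_integral_le_of_norm_le ((integrable_invSqMajorant hs hw).const_mul _)
    (.of_forall (norm_mul_le_invSqMajorant hs hw hsw hf hg))

end Convolution

/-- Proposition 4 of the paper: the convolution with the kernel `μ̃`
preserves the weighted bound. For `b > 0` and
`μ̃(z) = (1/(2b)) ψ₁(1 + z/(2b)) − 1/(z + 2b)`, there is `M > 0`, depending only on `b`,
such that for all `A > 2b`, `B > 0` and every continuous function `y` on the vertical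
line `Re s = A` with `|y(A + iη)| ≤ B/|A + iη|²`, the convolution
`(μ̃ ∗ y)(z) = (1/(2π)) ∫ y(A + iη) μ̃(z − A − iη) dη` converges absolutely for every
`z` with `Re z ≥ A` and satisfies `|(μ̃ ∗ y)(z)| ≤ M b B / |z|²` there. -/
theorem stmt_15 (b : ℝ) (hb : 0 < b)
    (μt : ℂ → ℂ)
    (hμt : ∀ z : ℂ, μt z = 1 / (2 * (b : ℂ)) * trigamma (1 + z / (2 * (b : ℂ)))
      - 1 / (z + 2 * (b : ℂ))) :
    ∃ M : ℝ, 0 < M ∧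
      ∀ (A B : ℝ), 2 * b < A → 0 < B →
        ∀ y : ℂ → ℂ, ContinuousOn y {s : ℂ | s.re = A} →
          (∀ η : ℝ, ‖y ((A : ℂ) + η * I)‖ ≤ B / ‖(A : ℂ) + η * I‖ ^ 2) →
          ∀ z : ℂ, A ≤ z.re →
            Integrable (fun η : ℝ => y ((A : ℂ) + η * I) * μt (z - (A : ℂ) - η * I)) ∧
            ‖(1 / (2 * Real.pi) : ℝ) •
                ∫ η : ℝ, y ((A : ℂ) + η * I) * μt (z - (A : ℂ) - η * I)‖
              ≤ M * b * B / ‖z‖ ^ 2 := by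
  obtain rfl : μt = trigammaKernel b := funext hμt
  refine ⟨16 / b, by positivity, fun A B hA hB y hy hyB z hz => ?_⟩
  have hw : 2 * b ≤ (z - A + 2 * b).re := by
    simpa only [add_re, sub_re, ofReal_re, mul_re, re_ofNat, im_ofNat, ofReal_im, mul_zero,
      sub_zero, le_add_iff_nonneg_left, sub_nonneg] using hz
  have hsw : (A : ℂ) + (z - A + 2 * b) = z + 2 * b := by ring
  have hz2b : ‖z‖ ≤ ‖z + 2 * b‖ := by
    exact_mod_cast Complex.norm_le_norm_add_ofReal (by linarith) (by positivity : 0 ≤ 2 * b)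
  have hz0 : 0 < ‖z‖ := norm_pos_iff.2 fun h => by rw [h, zero_re] at hz; linarith
  have hsw0 : (A : ℂ) + (z - A + 2 * b) ≠ 0 := by rw [← norm_pos_iff, hsw]; linarith
  have hs : (A : ℂ).re ≠ 0 := by rw [ofReal_re]; linarith
  have hk := norm_trigammaKernel_sub_mul_I_le hb hz
  have hyc : Continuous fun η : ℝ => y (A + η * I) :=
    hy.comp_continuous (by fun_prop) fun η => by simp
  refine ⟨integrable_mul_of_inv_sq_bounds hs (by linarith) hsw0 hyc.aestronglyMeasurable
    (continuous_trigammaKernel_sub_mul_I hb hz).aestronglyMeasurable hyB hk, ?_⟩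
  have hint := norm_integral_mul_le_of_inv_sq_bounds hs (by linarith) hsw0 hyB hk
  rw [hsw, ofReal_re, abs_of_pos (by linarith), abs_of_pos (by linarith)] at hint
  have hπ : π / A + π / (z - A + 2 * b).re ≤ π / b := by
    calc π / A + π / (z - A + 2 * b).re ≤ π / (2 * b) + π / (2 * b) := by gcongr
      _ = π / b := by field_simp; ring
  have hπ0 : 0 ≤ π / A + π / (z - A + 2 * b).re :=
    add_nonneg (div_nonneg Real.pi_pos.le (by linarith)) (div_nonneg Real.pi_pos.le (by linarith))
  rw [norm_smul, Real.norm_of_nonneg (by positivity)]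
  calc 1 / (2 * π) * ‖∫ η : ℝ, y (A + η * I) * trigammaKernel b (z - A - η * I)‖
      ≤ 1 / (2 * π) * (2 * B * (16 * b) / ‖z‖ ^ 2 * (π / b)) := by
        gcongr
        exact hint.trans (by gcongr)
    _ = 16 / b * b * B / ‖z‖ ^ 2 := by field_simp
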